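/- arXiv:2403.18626 — 4 statements merged into one kernel-verified Lean document; each statement's English description precedes it below -/
import Mathlib

section
/- Let α ∈ (0,2), β ∈ (0,α), T > 0, d ≥ 1, and let δ_α = (2^{d+α} α K / s_{d−1}) (1 − 2^{−α})^{−1} for a constant K ≥ 1. Let (Z_k)_{k≥1} be i.i.d. random vectors on ℝ^d whose common law μ satisfies, for all z > 1, μ(|Z| ≥ z) ≥ s_{d−1} z^{−α} / (2^{d+α} α K) and μ(z ≤ |Z| ≤ 2z) ≥ 1/(δ_α z^α). Define the Euler–Maruyama scheme Y_{k+1} = Y_k − η Y_k log(1+|Y_k|) + η^{1/α} Z_{k+1}, Y_0 = x_0, with step size η = T/n. Set K_1 = 2(e^{δ_α/β} + 2)/T and assume T/n ≤ 1, K_1 < (δ_α − log δ_α)/(α − β), and e^{n K_1} ≥ |x_0|(1 + log(1+|x_0|)). Then there exist a constant C > 0 and a sequence of non-empty events Ω_n with P(Ω_n) ≥ C e^{−α n K_1}/(n δ_α^n) and |Y_n(ω)| ≥ exp{n K_1 + (n−1) δ_α/β} for every ω ∈ Ω_n and all n large enough; consequently, lim_{n→∞} E|Y_n|^β = ∞.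 -/
open MeasureTheory ProbabilityTheory Real Filter

/-- Surface area of the unit sphere `𝕊^{d-1} ⊆ ℝ^d`: `s_{d-1} = 2 π^{d/2} / Γ(d/2)`. -/
noncomputable def sphereArea (d : ℕ) : ℝ := 2 * Real.pi ^ ((d : ℝ) / 2) / Real.Gamma ((d : ℝ) / 2)

/-!
Write `η = T/n` and `B = |x₀| (1 + T log(1 + |x₀|))`, a bound for the deterministic part of the
first step. Once `|Y_k| ≥ e^{n K₁}`, the drift coefficient `η log(1 + |Y_k|)` is at least
`T K₁ = 2 (e^{δ/β} + 2)`, so the step `Y ↦ Y - η Y log(1 + |Y|)` overshoots and multiplies `|Y|`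
by at least `e^{δ/β}`, and a noise increment of size at most `4` cannot undo this. Hence on the
event that `|Z_1| ≥ (1 + B) e^{n K₁} / η^{1/α}` and `1 + 1/n ≤ |Z_k| ≤ 2 (1 + 1/n)` for
`2 ≤ k ≤ n`, we get `|Y_n| ≥ e^{n K₁ + (n-1) δ/β}`. By independence and the two tail bounds
this event has probability at least a constant times `e^{-α n K₁} / (n δ^n)`, and Markov's
inequality gives `E|Y_n|^β ≳ e^{n ((β - α) K₁ + δ - log δ)} / n`, which diverges because
`K₁ (α - β) < δ - log δ`.
-/
lemma sphereArea_pos {d : ℕ} (hd : d ≠ 0) : 0 < sphereArea d := by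
  have hΓ : 0 < Gamma ((d : ℝ) / 2) := Gamma_pos_of_pos (by positivity)
  unfold sphereArea
  positivity

lemma one_add_inv_rpow_pow_le_exp {α : ℝ} (hα : 0 ≤ α) (n : ℕ) :
    ((1 + (n : ℝ)⁻¹) ^ α) ^ (n - 1) ≤ exp α := by
  have h1 : 1 ≤ 1 + (n : ℝ)⁻¹ := le_add_of_nonneg_right (by positivity)
  calc ((1 + (n : ℝ)⁻¹) ^ α) ^ (n - 1) ≤ ((1 + (n : ℝ)⁻¹) ^ α) ^ n :=
        pow_le_pow_right₀ (one_le_rpow h1 hα) (Nat.sub_le n 1)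
    _ = ((1 + (n : ℝ)⁻¹) ^ n) ^ α := rpow_pow_comm (by positivity) α n
    _ ≤ exp 1 ^ α := by gcongr; exact one_add_inv_pow_le_exp
    _ = exp α := by rw [← exp_mul, one_mul]

section Event

variable {Ω E : Type*} [NormedAddCommGroup E]

def bigFirstJumpEvent (Z : ℕ → Ω → E) (r s : ℝ) (n : ℕ) : Set Ω :=
  Z 1 ⁻¹' {x | r ≤ ‖x‖} ∩ ⋂ k ∈ Finset.Icc 2 n, Z k ⁻¹' {x | s ≤ ‖x‖ ∧ ‖x‖ ≤ 2 * s}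

lemma mem_bigFirstJumpEvent {Z : ℕ → Ω → E} {r s : ℝ} {n : ℕ} {ω : Ω} :
    ω ∈ bigFirstJumpEvent Z r s n ↔
      r ≤ ‖Z 1 ω‖ ∧ ∀ k ∈ Finset.Icc 2 n, s ≤ ‖Z k ω‖ ∧ ‖Z k ω‖ ≤ 2 * s := by
  simp only [bigFirstJumpEvent, Set.mem_inter_iff, Set.mem_iInter₂, Set.mem_preimage]
  rfl

end Event

section EulerMaruyama

variable {E : Type*} [NormedAddCommGroup E] [NormedSpace ℝ E]

noncomputable def emStep (η a : ℝ) (y z : E) : E := y - (η * log (1 + ‖y‖)) • y + a • z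

lemma emStep_eq (η a : ℝ) (y z : E) :
    emStep η a y z = (1 - η * log (1 + ‖y‖)) • y + a • z := by
  rw [emStep, sub_smul, one_smul]

lemma sub_le_norm_emStep {η : ℝ} (hη : 0 ≤ η) (a : ℝ) (y z : E) :
    a * ‖z‖ - ‖y‖ * (1 + η * log (1 + ‖y‖)) ≤ ‖emStep η a y z‖ := by
  have hlog : 0 ≤ log (1 + ‖y‖) := log_nonneg (by linarith [norm_nonneg y])
  have hdrift : ‖y - (η * log (1 + ‖y‖)) • y‖ ≤ ‖y‖ * (1 + η * log (1 + ‖y‖)) :=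
    calc _ ≤ ‖y‖ + ‖(η * log (1 + ‖y‖)) • y‖ := norm_sub_le _ _
      _ = _ := by rw [norm_smul, norm_of_nonneg (by positivity)]; ring
  have hnoise : a * ‖z‖ ≤ ‖a • z‖ := by
    rw [norm_smul, norm_eq_abs]
    exact mul_le_mul_of_nonneg_right (le_abs_self a) (norm_nonneg z)
  calc _ ≤ ‖a • z‖ - ‖y - (η * log (1 + ‖y‖)) • y‖ := by linarith
    _ ≤ ‖emStep η a y z‖ := by
      rw [emStep, add_comm _ (a • z)]
      exact norm_sub_le_norm_add _ _

lemma exp_mul_norm_le_norm_emStep {η a ρ : ℝ} {y z : E} (hρ : 0 ≤ ρ) (hy : 1 ≤ ‖y‖)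
    (hc : 2 * (exp ρ + 2) ≤ η * log (1 + ‖y‖)) (hz : ‖a • z‖ ≤ 4) :
    exp ρ * ‖y‖ ≤ ‖emStep η a y z‖ := by
  set c := η * log (1 + ‖y‖)
  have hρ1 : 1 ≤ exp ρ := one_le_exp hρ
  have hdrift : (c - 1) * ‖y‖ ≤ ‖(1 - c) • y‖ := by
    rw [norm_smul, norm_eq_abs, abs_sub_comm]
    exact mul_le_mul_of_nonneg_right (le_abs_self _) (norm_nonneg y)
  calc exp ρ * ‖y‖ ≤ (c - 1) * ‖y‖ - 4 := by nlinarith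
    _ ≤ ‖(1 - c) • y‖ - ‖a • z‖ := by linarith
    _ ≤ ‖emStep η a y z‖ := by rw [emStep_eq]; exact norm_sub_le_norm_add _ _

theorem exp_le_norm_emStep_iterate {y z : ℕ → E} {η a M ρ B : ℝ} {n : ℕ}
    (hrec : ∀ k, y (k + 1) = emStep η a (y k) (z (k + 1)))
    (hη : 0 ≤ η) (ha : 0 < a) (hM : 0 ≤ M) (hρ : 0 ≤ ρ) (hηM : 2 * (exp ρ + 2) ≤ η * M)
    (hB : ‖y 0‖ * (1 + η * log (1 + ‖y 0‖)) ≤ B)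
    (hz₁ : (1 + B) * exp M / a ≤ ‖z 1‖) (hz : ∀ k ∈ Finset.Icc 2 n, ‖a • z k‖ ≤ 4) :
    ∀ k ∈ Finset.Icc 1 n, exp (M + (k - 1) * ρ) ≤ ‖y k‖ := by
  intro k hk
  obtain ⟨hk1, hkn⟩ := Finset.mem_Icc.1 hk
  clear hk
  induction k, hk1 using Nat.le_induction with
  | base =>
    have hlog : 0 ≤ log (1 + ‖y 0‖) := log_nonneg (by linarith [norm_nonneg (y 0)])
    have hB0 : 0 ≤ B := le_trans (by positivity) hB
    have hstart := sub_le_norm_emStep hη a (y 0) (z 1)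
    rw [div_le_iff₀ ha] at hz₁
    rw [hrec, Nat.cast_one, sub_self, zero_mul, add_zero]
    nlinarith [mul_nonneg hB0 (sub_nonneg.2 (one_le_exp hM))]
  | succ k hk ih =>
    have hy := ih (by omega)
    have hexpM : exp M ≤ ‖y k‖ := by
      refine le_trans (exp_le_exp.2 ?_) hy
      have : (1 : ℝ) ≤ k := by exact_mod_cast hk
      nlinarith
    have hlog : M ≤ log (1 + ‖y k‖) := by
      rw [le_log_iff_exp_le (by positivity)]
      linarith
    calc exp (M + ((k + 1 : ℕ) - 1) * ρ) = exp ρ * exp (M + (k - 1) * ρ) := by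
          rw [← exp_add]; push_cast; ring_nf
      _ ≤ exp ρ * ‖y k‖ := by gcongr
      _ ≤ ‖y (k + 1)‖ := by
        rw [hrec]
        exact exp_mul_norm_le_norm_emStep hρ ((one_le_exp hM).trans hexpM)
          (hηM.trans (by gcongr)) (hz _ (Finset.mem_Icc.2 ⟨by omega, hkn⟩))

lemma aemeasurable_emStep_iterate [MeasurableSpace E] [BorelSpace E] [SecondCountableTopology E]
    {Ω : Type*} [MeasurableSpace Ω] {P : Measure Ω} {Y Z : ℕ → Ω → E} {η a : ℝ}
    (hY₀ : AEMeasurable (Y 0) P) (hZ : ∀ k, AEMeasurable (Z k) P)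
    (hrec : ∀ k ω, Y (k + 1) ω = emStep η a (Y k ω) (Z (k + 1) ω)) (k : ℕ) :
    AEMeasurable (Y k) P := by
  induction k with
  | zero => exact hY₀
  | succ k ih =>
    rw [funext (hrec k)]
    unfold emStep
    have := hZ (k + 1)
    fun_prop

theorem exp_le_norm_of_mem_bigFirstJumpEvent {Ω : Type*} {Y Z : ℕ → Ω → E} {x₀ : E}
    {T α ρ K₁ : ℝ} {n : ℕ} (hY₀ : ∀ ω, Y 0 ω = x₀)
    (hrec : ∀ k ω, Y (k + 1) ω = emStep (T / n) ((T / n) ^ α⁻¹) (Y k ω) (Z (k + 1) ω))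
    (hT : 0 < T) (hα : 0 < α) (hρ : 0 ≤ ρ) (hK₁ : K₁ = 2 * (exp ρ + 2) / T) (hn : 1 ≤ n)
    (hnT : T ≤ n) {ω : Ω}
    (hω : ω ∈ bigFirstJumpEvent Z ((1 + ‖x₀‖ * (1 + T * log (1 + ‖x₀‖))) * exp (n * K₁)
      / (T / n) ^ α⁻¹) (1 + (n : ℝ)⁻¹) n) :
    exp (n * K₁ + (n - 1) * ρ) ≤ ‖Y n ω‖ := by
  obtain ⟨hZ₁, hZk⟩ := mem_bigFirstJumpEvent.1 hω
  have hn₁ : (1 : ℝ) ≤ n := by exact_mod_cast hn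
  have hη₀ : 0 < T / n := div_pos hT (by positivity)
  have hη₁ : T / n ≤ 1 := (div_le_one (by positivity)).2 hnT
  have hK₁₀ : 0 < K₁ := by rw [hK₁]; positivity
  have hlog : 0 ≤ log (1 + ‖x₀‖) := log_nonneg (by linarith [norm_nonneg x₀])
  refine exp_le_norm_emStep_iterate (y := fun k => Y k ω) (z := fun k => Z k ω)
    (fun k => hrec k ω) hη₀.le (rpow_pos_of_pos hη₀ _) (by positivity) hρ ?_ ?_ hZ₁ ?_ n
    (Finset.right_mem_Icc.2 hn)
  · rw [hK₁]; field_simp; rfl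
  · rw [hY₀]
    gcongr
    exact div_le_self hT.le hn₁
  · intro k hk
    rw [norm_smul, norm_of_nonneg (by positivity)]
    have : (n : ℝ)⁻¹ ≤ 1 := inv_le_one_of_one_le₀ hn₁
    nlinarith [(hZk k hk).2, rpow_le_one hη₀.le hη₁ (inv_nonneg.2 hα.le), norm_nonneg (Z k ω)]

end EulerMaruyama

section Noise

variable {Ω E : Type*} [MeasurableSpace Ω] [MeasurableSpace E] {P : Measure Ω} {μ : Measure E}
  {Z : ℕ → Ω → E}

lemma measure_preimage_inter_biInter_preimage (hInd : iIndepFun Z P)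
    (hZ : ∀ k, AEMeasurable (Z k) P) (hLaw : ∀ k, P.map (Z k) = μ) {A S : Set E}
    (hA : MeasurableSet A) (hS : MeasurableSet S) (n : ℕ) :
    P (Z 1 ⁻¹' A ∩ ⋂ k ∈ Finset.Icc 2 n, Z k ⁻¹' S) = μ A * μ S ^ (n - 1) := by
  have hlaw : ∀ k T, MeasurableSet T → P (Z k ⁻¹' T) = μ T := fun k T hT => by
    rw [← hLaw k, Measure.map_apply_of_aemeasurable (hZ k) hT]
  have h1 : 1 ∉ Finset.Icc 2 n := by simp
  have hevent : Z 1 ⁻¹' A ∩ ⋂ k ∈ Finset.Icc 2 n, Z k ⁻¹' S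
      = ⋂ k ∈ insert 1 (Finset.Icc 2 n), Z k ⁻¹' (if k = 1 then A else S) := by
    rw [Finset.set_biInter_insert, if_pos rfl]
    congr 1
    refine Set.iInter₂_congr fun k hk => ?_
    rw [if_neg (ne_of_mem_of_not_mem hk h1)]
  rw [hevent, hInd.meas_biInter fun k _ => ⟨_, by split_ifs <;> assumption, rfl⟩,
    Finset.prod_insert h1, if_pos rfl, hlaw 1 A hA]
  rw [Finset.prod_congr rfl fun k hk => by rw [if_neg (ne_of_mem_of_not_mem hk h1), hlaw k S hS],
    Finset.prod_const, Nat.card_Icc]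
  congr 2

variable [NormedAddCommGroup E] [OpensMeasurableSpace E]

lemma ofReal_le_measure_bigFirstJumpEvent (hInd : iIndepFun Z P)
    (hZ : ∀ k, AEMeasurable (Z k) P) (hLaw : ∀ k, P.map (Z k) = μ) {c₀ α δ R η : ℝ} {n : ℕ}
    (hc₀ : 0 ≤ c₀) (hα : 0 < α) (hδ : 0 < δ) (hR : 1 < R) (hη₀ : 0 < η) (hη₁ : η ≤ 1)
    (hn : n ≠ 0)
    (htail : ∀ z : ℝ, 1 < z → ENNReal.ofReal (c₀ * z ^ (-α)) ≤ μ {x | z ≤ ‖x‖})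
    (hannulus : ∀ z : ℝ, 1 < z →
      ENNReal.ofReal (1 / (δ * z ^ α)) ≤ μ {x | z ≤ ‖x‖ ∧ ‖x‖ ≤ 2 * z}) :
    ENNReal.ofReal (c₀ * R ^ (-α) * η * (exp (-α) / δ ^ (n - 1)))
      ≤ P (bigFirstJumpEvent Z (R / η ^ α⁻¹) (1 + (n : ℝ)⁻¹) n) := by
  have hannulus_meas : MeasurableSet {x : E | 1 + (n : ℝ)⁻¹ ≤ ‖x‖ ∧ ‖x‖ ≤ 2 * (1 + (n : ℝ)⁻¹)} :=
    (measurableSet_le measurable_const measurable_norm).inter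
      (measurableSet_le measurable_norm measurable_const)
  rw [bigFirstJumpEvent, measure_preimage_inter_biInter_preimage hInd hZ hLaw
    (measurableSet_le measurable_const measurable_norm) hannulus_meas,
    ENNReal.ofReal_mul (by positivity)]
  have ha₀ : 0 < η ^ α⁻¹ := rpow_pos_of_pos hη₀ _
  gcongr
  · have hr : 1 < R / η ^ α⁻¹ :=
      hR.trans_le (le_div_self (by linarith) ha₀ (rpow_le_one hη₀.le hη₁ (by positivity)))
    refine le_of_eq_of_le ?_ (htail _ hr)
    rw [div_rpow (by linarith) ha₀.le, ← rpow_mul hη₀.le, inv_mul_eq_div, neg_div,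
      div_self hα.ne', rpow_neg_one, div_inv_eq_mul, mul_assoc]
  · have hz : 1 < 1 + (n : ℝ)⁻¹ :=
      lt_add_of_pos_right 1 (inv_pos.2 (Nat.cast_pos.2 (Nat.pos_of_ne_zero hn)))
    have hreal : exp (-α) / δ ^ (n - 1) ≤ (1 / (δ * (1 + (n : ℝ)⁻¹) ^ α)) ^ (n - 1) :=
      calc exp (-α) / δ ^ (n - 1) = 1 / (δ ^ (n - 1) * exp α) := by
            rw [exp_neg]; field_simp
        _ ≤ 1 / (δ ^ (n - 1) * ((1 + (n : ℝ)⁻¹) ^ α) ^ (n - 1)) := by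
            gcongr
            exact one_add_inv_rpow_pow_le_exp hα.le n
        _ = (1 / (δ * (1 + (n : ℝ)⁻¹) ^ α)) ^ (n - 1) := by rw [div_pow, one_pow, mul_pow]
    calc ENNReal.ofReal (exp (-α) / δ ^ (n - 1))
        ≤ ENNReal.ofReal ((1 / (δ * (1 + (n : ℝ)⁻¹) ^ α)) ^ (n - 1)) :=
          ENNReal.ofReal_le_ofReal hreal
      _ = ENNReal.ofReal (1 / (δ * (1 + (n : ℝ)⁻¹) ^ α)) ^ (n - 1) :=
          ENNReal.ofReal_pow (by positivity) _
      _ ≤ _ := by gcongr; exact hannulus _ hz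

lemma ofReal_le_measure_bigFirstJumpEvent_of_stepSize (hInd : iIndepFun Z P)
    (hZ : ∀ k, AEMeasurable (Z k) P) (hLaw : ∀ k, P.map (Z k) = μ) {c₀ α δ T K₁ L : ℝ} {n : ℕ}
    (hc₀ : 0 ≤ c₀) (hα : 0 < α) (hδ : 0 < δ) (hT : 0 < T) (hK₁ : 0 < K₁) (hL : 1 ≤ L)
    (hn : 1 ≤ n) (hnT : T ≤ n)
    (htail : ∀ z : ℝ, 1 < z → ENNReal.ofReal (c₀ * z ^ (-α)) ≤ μ {x | z ≤ ‖x‖})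
    (hannulus : ∀ z : ℝ, 1 < z →
      ENNReal.ofReal (1 / (δ * z ^ α)) ≤ μ {x | z ≤ ‖x‖ ∧ ‖x‖ ≤ 2 * z}) :
    ENNReal.ofReal (c₀ * L ^ (-α) * T * δ * exp (-α) * exp (-α * n * K₁) / (n * δ ^ n))
      ≤ P (bigFirstJumpEvent Z (L * exp (n * K₁) / (T / n) ^ α⁻¹) (1 + (n : ℝ)⁻¹) n) := by
  have hn₀ : (0 : ℝ) < n := by exact_mod_cast hn
  have hR : 1 < L * exp (n * K₁) := by
    nlinarith [one_lt_exp_iff.2 (mul_pos hn₀ hK₁)]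
  refine le_of_eq_of_le ?_ (ofReal_le_measure_bigFirstJumpEvent hInd hZ hLaw hc₀ hα hδ hR
    (div_pos hT hn₀) ((div_le_one hn₀).2 hnT) (by omega) htail hannulus)
  rw [mul_rpow (by linarith) (exp_pos _).le, ← exp_mul, ← pow_sub_one_mul (by omega : n ≠ 0) δ,
    show n * K₁ * -α = -α * n * K₁ by ring]
  congr 1
  field_simp

lemma ofReal_rpow_mul_measure_le_lintegral {f : Ω → E} (hf : AEMeasurable f P) {A : Set Ω}
    {M β : ℝ} (hM : 0 ≤ M) (hβ : 0 ≤ β) (hA : ∀ ω ∈ A, M ≤ ‖f ω‖) :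
    ENNReal.ofReal (M ^ β) * P A ≤ ∫⁻ ω, ENNReal.ofReal (‖f ω‖ ^ β) ∂P :=
  calc ENNReal.ofReal (M ^ β) * P A
      ≤ ENNReal.ofReal (M ^ β) * P {ω | ENNReal.ofReal (M ^ β) ≤ ENNReal.ofReal (‖f ω‖ ^ β)} := by
        gcongr
        intro ω hω
        exact ENNReal.ofReal_le_ofReal (rpow_le_rpow hM (hA ω hω) hβ)
    _ ≤ _ := mul_meas_ge_le_lintegral₀ (hf.norm.pow_const β).ennreal_ofReal _

lemma tendsto_lintegral_rpow_norm_atTop {Y : ℕ → Ω → E} {Ωn : ℕ → Set Ω}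
    (hY : ∀ n, AEMeasurable (Y n) P) {C α β δ K₁ : ℝ} (hC : 0 < C) (hβ : 0 < β) (hδ : 0 < δ)
    (hγ : 0 < (β - α) * K₁ + δ - log δ)
    (h : ∀ᶠ n : ℕ in atTop, ENNReal.ofReal (C * exp (-α * n * K₁) / (n * δ ^ n)) ≤ P (Ωn n) ∧
      ∀ ω ∈ Ωn n, exp (n * K₁ + ((n : ℝ) - 1) * δ / β) ≤ ‖Y n ω‖) :
    Tendsto (fun n : ℕ => ∫⁻ ω, ENNReal.ofReal (‖Y n ω‖ ^ β) ∂P) atTop (nhds ⊤) := by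
  set γ := (β - α) * K₁ + δ - log δ
  have hgrowth : Tendsto
      (fun n : ℕ => ENNReal.ofReal (C * exp (-δ) * (exp (γ * n) / (n : ℝ) ^ (1 : ℝ)))) atTop
      (nhds ⊤) :=
    ENNReal.tendsto_ofReal_atTop.comp (((tendsto_exp_mul_div_rpow_atTop 1 γ hγ).comp
      tendsto_natCast_atTop_atTop).const_mul_atTop (by positivity))
  refine tendsto_nhds_top_mono hgrowth (h.mono fun n ⟨hP, hYn⟩ => ?_)
  have hδn : δ ^ n = exp (n * log δ) := by rw [exp_nat_mul, exp_log hδ]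
  have harg : -δ + γ * n
      = (n * K₁ + ((n : ℝ) - 1) * δ / β) * β + -α * n * K₁ - n * log δ := by
    simp only [γ]; field_simp; ring
  calc ENNReal.ofReal (C * exp (-δ) * (exp (γ * n) / (n : ℝ) ^ (1 : ℝ)))
      = ENNReal.ofReal (exp (n * K₁ + ((n : ℝ) - 1) * δ / β) ^ β)
          * ENNReal.ofReal (C * exp (-α * n * K₁) / (n * δ ^ n)) := by
        rw [← ENNReal.ofReal_mul (by positivity), rpow_one, ← exp_mul, hδn]
        congr 1
        calc C * exp (-δ) * (exp (γ * n) / n) = C * exp (-δ + γ * n) / n := by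
              rw [exp_add]; ring
          _ = _ := by rw [harg, exp_sub, exp_add]; field_simp
    _ ≤ ENNReal.ofReal (exp (n * K₁ + ((n : ℝ) - 1) * δ / β) ^ β) * P (Ωn n) := by gcongr
    _ ≤ _ := ofReal_rpow_mul_measure_le_lintegral (hY n) (exp_pos _).le hβ.le hYn

end Noise

theorem em_divergence_stable_noise_general
    {Ω : Type*} [MeasurableSpace Ω] (P : Measure Ω)
    (d : ℕ) (hd : 1 ≤ d) (α β T K : ℝ)
    (hα : α ∈ Set.Ioo (0 : ℝ) 2) (hβ : β ∈ Set.Ioo (0 : ℝ) α) (hT : 0 < T) (hK : 1 ≤ K)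
    (δ : ℝ) (hδ : δ = 2 ^ ((d : ℝ) + α) * α * K / sphereArea d * (1 - 2 ^ (-α))⁻¹)
    (μ : Measure (EuclideanSpace ℝ (Fin d)))
    (hμ_tail : ∀ z : ℝ, 1 < z →
      ENNReal.ofReal (sphereArea d * z ^ (-α) / (2 ^ ((d : ℝ) + α) * α * K))
        ≤ μ {x | z ≤ ‖x‖})
    (hμ_annulus : ∀ z : ℝ, 1 < z →
      ENNReal.ofReal (1 / (δ * z ^ α)) ≤ μ {x | z ≤ ‖x‖ ∧ ‖x‖ ≤ 2 * z})
    (Z : ℕ → Ω → EuclideanSpace ℝ (Fin d))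
    (hIndep : iIndepFun Z P)
    (hLaw : ∀ k, Measure.map (Z k) P = μ)
    (x₀ : EuclideanSpace ℝ (Fin d))
    (Y : ℕ → ℕ → Ω → EuclideanSpace ℝ (Fin d))
    (hY0 : ∀ n ω, Y n 0 ω = x₀)
    (hYrec : ∀ n k ω, Y n (k + 1) ω
      = Y n k ω - (T / n * Real.log (1 + ‖Y n k ω‖)) • Y n k ω
        + ((T / n) ^ α⁻¹ : ℝ) • Z (k + 1) ω)
    (K₁ : ℝ) (hK₁ : K₁ = 2 * (Real.exp (δ / β) + 2) / T)
    (hK₁small : K₁ < (δ - Real.log δ) / (α - β)) :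
    ∃ C : ℝ, 0 < C ∧ ∃ Ωn : ℕ → Set Ω,
      (∀ᶠ n : ℕ in atTop,
        (Ωn n).Nonempty ∧
        ENNReal.ofReal (C * Real.exp (-α * n * K₁) / (n * δ ^ n)) ≤ P (Ωn n) ∧
        ∀ ω ∈ Ωn n, Real.exp (n * K₁ + ((n : ℝ) - 1) * δ / β) ≤ ‖Y n n ω‖) ∧
      Tendsto (fun n : ℕ => ∫⁻ ω, ENNReal.ofReal (‖Y n n ω‖ ^ β) ∂P) atTop (nhds ⊤) := by
  obtain ⟨hα₀, -⟩ := hα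
  obtain ⟨hβ₀, hβα⟩ := hβ
  have hK₀ : 0 < K := by linarith
  have hs : 0 < sphereArea d := sphereArea_pos (by omega)
  set c₀ := sphereArea d / (2 ^ ((d : ℝ) + α) * α * K)
  have htail : ∀ z : ℝ, 1 < z → ENNReal.ofReal (c₀ * z ^ (-α)) ≤ μ {x | z ≤ ‖x‖} :=
    fun z hz => by simpa only [mul_div_right_comm] using hμ_tail z hz
  have hμ₀ : μ ≠ 0 := fun h => (ENNReal.ofReal_pos.2 (by positivity)).not_ge
    ((htail 2 one_lt_two).trans_eq (by rw [h]; rfl))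
  have hZ : ∀ k, AEMeasurable (Z k) P := fun k => aemeasurable_of_map_neZero ⟨hLaw k ▸ hμ₀⟩
  have hδ₀ : 0 < δ := hδ ▸ mul_pos (by positivity)
    (inv_pos.2 (sub_pos.2 (rpow_lt_one_of_one_lt_of_neg one_lt_two (neg_neg_of_pos hα₀))))
  have hK₁₀ : 0 < K₁ := by rw [hK₁]; positivity
  have hγ : 0 < (β - α) * K₁ + δ - log δ := by
    rw [lt_div_iff₀ (sub_pos.2 hβα)] at hK₁small
    linarith
  set L := 1 + ‖x₀‖ * (1 + T * log (1 + ‖x₀‖))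
  have hlog : 0 ≤ log (1 + ‖x₀‖) := log_nonneg (by linarith [norm_nonneg x₀])
  have hL : 1 ≤ L := le_add_of_nonneg_right (by positivity)
  set C := c₀ * L ^ (-α) * T * δ * exp (-α)
  set Ωn : ℕ → Set Ω := fun n =>
    bigFirstJumpEvent Z (L * exp (n * K₁) / (T / n) ^ α⁻¹) (1 + (n : ℝ)⁻¹) n
  have hev : ∀ᶠ n : ℕ in atTop,
      (Ωn n).Nonempty ∧
      ENNReal.ofReal (C * Real.exp (-α * n * K₁) / (n * δ ^ n)) ≤ P (Ωn n) ∧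
      ∀ ω ∈ Ωn n, Real.exp (n * K₁ + ((n : ℝ) - 1) * δ / β) ≤ ‖Y n n ω‖ := by
    filter_upwards [eventually_ge_atTop 1, tendsto_natCast_atTop_atTop.eventually_ge_atTop T]
      with n hn hnT
    have hP := ofReal_le_measure_bigFirstJumpEvent_of_stepSize hIndep hZ hLaw (by positivity)
      hα₀ hδ₀ hT hK₁₀ hL hn hnT htail hμ_annulus
    have hn₀ : (0 : ℝ) < n := by exact_mod_cast hn
    refine ⟨nonempty_of_measure_ne_zero (lt_of_lt_of_le (by positivity) hP).ne', hP,
      fun ω hω => ?_⟩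
    rw [mul_div_assoc]
    exact exp_le_norm_of_mem_bigFirstJumpEvent (hY0 n) (hYrec n) hT hα₀ (by positivity) hK₁ hn
      hnT hω
  exact ⟨C, by positivity, Ωn, hev, tendsto_lintegral_rpow_norm_atTop
    (fun n => aemeasurable_emStep_iterate (by rw [funext (hY0 n)]; exact aemeasurable_const)
      hZ (hYrec n) n) (by positivity) hβ₀ hδ₀ hγ (hev.mono fun _ h => h.2)⟩

/-- Divergence of the Euler–Maruyama scheme
`Y_{k+1} = Y_k − η Y_k log(1+|Y_k|) + η^{1/α} Z_{k+1}` with step `η = T/n`, driven by i.i.d.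
noise whose law satisfies the stable-type lower tail bounds: there are `C > 0` and non-empty
events `Ω_n` with `P(Ω_n) ≥ C e^{−α n K₁}/(n δ_α^n)` and
`|Y_n| ≥ exp{n K₁ + (n−1) δ_α/β}` on `Ω_n` for all large `n`; consequently
`E|Y_n|^β → ∞`. -/
theorem em_divergence_stable_noise
    {Ω : Type*} [MeasurableSpace Ω] (P : Measure Ω) [IsProbabilityMeasure P]
    (d : ℕ) (hd : 1 ≤ d) (α β T K : ℝ)
    (hα : α ∈ Set.Ioo (0 : ℝ) 2) (hβ : β ∈ Set.Ioo (0 : ℝ) α) (hT : 0 < T) (hK : 1 ≤ K)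
    (δ : ℝ) (hδ : δ = 2 ^ ((d : ℝ) + α) * α * K / sphereArea d * (1 - 2 ^ (-α))⁻¹)
    (μ : Measure (EuclideanSpace ℝ (Fin d)))
    (hμ_tail : ∀ z : ℝ, 1 < z →
      ENNReal.ofReal (sphereArea d * z ^ (-α) / (2 ^ ((d : ℝ) + α) * α * K))
        ≤ μ {x | z ≤ ‖x‖})
    (hμ_annulus : ∀ z : ℝ, 1 < z →
      ENNReal.ofReal (1 / (δ * z ^ α)) ≤ μ {x | z ≤ ‖x‖ ∧ ‖x‖ ≤ 2 * z})
    (Z : ℕ → Ω → EuclideanSpace ℝ (Fin d))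
    (hIndep : iIndepFun Z P)
    (hLaw : ∀ k, Measure.map (Z k) P = μ)
    (x₀ : EuclideanSpace ℝ (Fin d))
    (Y : ℕ → ℕ → Ω → EuclideanSpace ℝ (Fin d))
    (hY0 : ∀ n ω, Y n 0 ω = x₀)
    (hYrec : ∀ n k ω, Y n (k + 1) ω
      = Y n k ω - (T / n * Real.log (1 + ‖Y n k ω‖)) • Y n k ω
        + ((T / n) ^ α⁻¹ : ℝ) • Z (k + 1) ω)
    (K₁ : ℝ) (hK₁ : K₁ = 2 * (Real.exp (δ / β) + 2) / T)
    (hK₁small : K₁ < (δ - Real.log δ) / (α - β)) :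
    ∃ C : ℝ, 0 < C ∧ ∃ Ωn : ℕ → Set Ω,
      (∀ᶠ n : ℕ in atTop,
        (Ωn n).Nonempty ∧
        ENNReal.ofReal (C * Real.exp (-α * n * K₁) / (n * δ ^ n)) ≤ P (Ωn n) ∧
        ∀ ω ∈ Ωn n, Real.exp (n * K₁ + ((n : ℝ) - 1) * δ / β) ≤ ‖Y n n ω‖) ∧
      Tendsto (fun n : ℕ => ∫⁻ ω, ENNReal.ofReal (‖Y n n ω‖ ^ β) ∂P) atTop (nhds ⊤) :=
  em_divergence_stable_noise_general P d hd α β T K hα hβ hT hK δ hδ μ hμ_tail hμ_annulus Z hIndep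
    hLaw x₀ Y hY0 hYrec K₁ hK₁ hK₁small
end

section
/- Fix d ≥ 1, n ∈ ℕ, η ∈ (0, e^{−5}], x_0 ∈ ℝ^d with |x_0| ≤ η^{−1/2}, and an integer 1 ≤ k ≤ ⌈e^{1/(2η)}⌉. Let (N_m)_{1≤m≤n} be vectors in ℝ^d with |N_m| < k/η for all 1 ≤ m ≤ n, and define Y_0 = x_0, Y_{m+1} = Y_m − η Y_m log(1+|Y_m|) + √η N_{m+1}. Then sup_{1 ≤ m ≤ n} |Y_m| ≤ k η^{−3/2}. -/
/-!
The ball of radius `b = k η^{-3/2}` is invariant under the recursion. The constraint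
`k ≤ ⌈e^{1/(2η)}⌉` gives `η log (1 + b) ≤ 1`, so on that ball `y ↦ y - η log (1 + |y|) y`
multiplies `|y|` by a factor in `[0, 1]`, and by at most `1 - η` once `|y| ≥ b/2 ≥ e - 1`;
hence the drift maps the ball into the ball of radius `(1 - η) b`, and the noise step
`√η |N| < k η^{-1/2} = η b` cannot leave the ball of radius `b`.
-/

open Real

section Drift

variable {E : Type*} [NormedAddCommGroup E] [NormedSpace ℝ E] {η b : ℝ}

theorem norm_sub_mul_log_smul_le (hη : 0 ≤ η) (hη2 : η ≤ 1 / 2) (hb : exp 1 ≤ 1 + b / 2)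
    (hlog : η * log (1 + b) ≤ 1) {y : E} (hy : ‖y‖ ≤ b) :
    ‖y - (η * log (1 + ‖y‖)) • y‖ ≤ (1 - η) * b := by
  set t := η * log (1 + ‖y‖)
  have ht0 : 0 ≤ t := mul_nonneg hη (log_nonneg (by linarith [norm_nonneg y]))
  have ht1 : t ≤ 1 :=
    (mul_le_mul_of_nonneg_left (log_le_log (by positivity) (by linarith)) hη).trans hlog
  have hnorm : ‖y - t • y‖ = (1 - t) * ‖y‖ := by
    rw [show y - t • y = (1 - t) • y by rw [sub_smul, one_smul], norm_smul,
      norm_of_nonneg (by linarith)]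
  rw [hnorm]
  by_cases hsmall : ‖y‖ ≤ b / 2
  · nlinarith [norm_nonneg y, add_one_le_exp 1]
  · have hlog1 : 1 ≤ log (1 + ‖y‖) := by
      rw [le_log_iff_exp_le (by positivity)]
      linarith
    have htη : η ≤ t := le_mul_of_one_le_right hη hlog1
    exact mul_le_mul (by linarith) hy (norm_nonneg y) (by linarith)

theorem norm_le_of_log_drift_step {n : ℕ} {Y ξ : ℕ → E} (hη : 0 ≤ η) (hη2 : η ≤ 1 / 2)
    (hb : exp 1 ≤ 1 + b / 2) (hlog : η * log (1 + b) ≤ 1) (hY0 : ‖Y 0‖ ≤ b)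
    (hξ : ∀ m, 1 ≤ m → m ≤ n → ‖ξ m‖ ≤ η * b)
    (hY : ∀ m, Y (m + 1) = Y m - (η * log (1 + ‖Y m‖)) • Y m + ξ (m + 1)) :
    ∀ m ≤ n, ‖Y m‖ ≤ b := by
  intro m
  induction m with
  | zero => exact fun _ ↦ hY0
  | succ m ih =>
    intro hm
    calc ‖Y (m + 1)‖
        ≤ ‖Y m - (η * log (1 + ‖Y m‖)) • Y m‖ + ‖ξ (m + 1)‖ := hY m ▸ norm_add_le _ _
      _ ≤ (1 - η) * b + η * b :=
        add_le_add (norm_sub_mul_log_smul_le hη hη2 hb hlog (ih (by omega)))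
          (hξ (m + 1) (by omega) hm)
      _ = b := by ring

end Drift

theorem exp_neg_five_lt : exp (-5) < 1 / 100 := by
  have h5 : exp 5 = exp 1 ^ 5 := by rw [← exp_nat_mul]; norm_num
  have h100 : 100 < exp 5 := by
    rw [h5]
    calc (100 : ℝ) < 2.7 ^ 5 := by norm_num
      _ ≤ exp 1 ^ 5 := pow_le_pow_left₀ (by norm_num) (by linarith [exp_one_gt_d9]) 5
  rw [exp_neg, inv_eq_one_div]
  exact one_div_lt_one_div_of_lt (by norm_num) h100

theorem mul_neg_log_le_two_mul_sqrt {x : ℝ} (hx : 0 < x) (hx1 : x ≤ 1) :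
    x * -log x ≤ 2 * √x := by
  have h := abs_log_mul_self_rpow_lt x (1 / 2) hx hx1 (by norm_num)
  rw [← sqrt_eq_rpow] at h
  have hx_eq : x = √x * √x := (mul_self_sqrt hx.le).symm
  nlinarith [sqrt_nonneg x, neg_abs_le (log x * √x)]

theorem mul_log_one_add_mul_rpow_le_one {η k : ℝ} (hη : 0 < η) (hη1 : η ≤ 1 / 100)
    (hk1 : 1 ≤ k) (hk : k ≤ 2 * exp (1 / (2 * η))) :
    η * log (1 + k * η ^ (-(3 : ℝ) / 2)) ≤ 1 := by
  set r := η ^ (-(3 : ℝ) / 2)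
  have hr1 : 1 ≤ r := one_le_rpow_of_pos_of_le_one_of_nonpos hη (by linarith) (by norm_num)
  have hlogk : log k ≤ log 2 + 1 / (2 * η) := by
    calc log k ≤ log (2 * exp (1 / (2 * η))) := log_le_log (by linarith) hk
      _ = log 2 + 1 / (2 * η) := by rw [log_mul two_ne_zero (exp_pos _).ne', log_exp]
  have hlog : log (1 + k * r) ≤ log 2 + log k + -(3 / 2) * log η := by
    calc log (1 + k * r) ≤ log (2 * k * r) := log_le_log (by positivity) (by nlinarith)
      _ = log 2 + log k + -(3 / 2) * log η := by
        rw [log_mul (by positivity) (by positivity), log_mul two_ne_zero (by positivity),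
          log_rpow hη]
        ring
  have hsqrt : √η ≤ 1 / 10 := by nlinarith [sq_sqrt hη.le, sqrt_nonneg η]
  have hentropy := mul_neg_log_le_two_mul_sqrt hη (by linarith)
  have hlog2 : log 2 < 1 := by linarith [log_two_lt_d9]
  calc η * log (1 + k * r) ≤ η * (2 * log 2 + 1 / (2 * η) + 3 / 2 * -log η) := by
        gcongr
        linarith
    _ = 2 * η * log 2 + 1 / 2 + 3 / 2 * (η * -log η) := by field_simp
    _ ≤ 1 := by nlinarith [log_nonneg one_le_two]

theorem em_bound_medium_noise_general
    (d : ℕ) (n : ℕ) (η : ℝ) (hη : 0 < η) (hη' : η ≤ Real.exp (-5))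
    (x₀ : EuclideanSpace ℝ (Fin d)) (hx₀ : ‖x₀‖ ≤ η ^ (-(1 : ℝ) / 2))
    (k : ℕ) (hk1 : 1 ≤ k) (hk2 : k ≤ ⌈Real.exp (1 / (2 * η))⌉₊)
    (N : ℕ → EuclideanSpace ℝ (Fin d))
    (hN : ∀ m, 1 ≤ m → m ≤ n → ‖N m‖ < k / η)
    (Y : ℕ → EuclideanSpace ℝ (Fin d)) (hY0 : Y 0 = x₀)
    (hYrec : ∀ m, Y (m + 1) = Y m - (η * Real.log (1 + ‖Y m‖)) • Y m + Real.sqrt η • N (m + 1)) :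
    ∀ m, 1 ≤ m → m ≤ n → ‖Y m‖ ≤ k * η ^ (-(3 : ℝ) / 2) := by
  intro m _ hmn
  have hη1 : η ≤ 1 / 100 := hη'.trans exp_neg_five_lt.le
  have hk : (k : ℝ) ≤ 2 * exp (1 / (2 * η)) :=
    (Nat.cast_le.2 hk2).trans <| Nat.ceil_le_two_mul <| by
      linarith [one_le_exp (by positivity : 0 ≤ 1 / (2 * η))]
  have hk1' : (1 : ℝ) ≤ k := by exact_mod_cast hk1
  have hr : η⁻¹ ≤ η ^ (-(3 : ℝ) / 2) := by
    rw [← rpow_neg_one]; exact rpow_le_rpow_of_exponent_ge hη (by linarith) (by norm_num)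
  have hsqrt : √η = η ^ 2 * η ^ (-(3 : ℝ) / 2) := by
    rw [sqrt_eq_rpow, ← rpow_natCast, ← rpow_add hη]; norm_num
  refine norm_le_of_log_drift_step (ξ := fun m ↦ √η • N m) hη.le (by linarith) ?_
    (mul_log_one_add_mul_rpow_le_one hη hη1 hk1' hk) ?_ ?_ hYrec m hmn
  · have : (100 : ℝ) ≤ η⁻¹ := by rw [le_inv_comm₀ (by norm_num) hη]; linarith
    nlinarith [exp_one_lt_d9]
  · rw [hY0]
    calc ‖x₀‖ ≤ η ^ (-(1 : ℝ) / 2) := hx₀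
      _ ≤ η ^ (-(3 : ℝ) / 2) := rpow_le_rpow_of_exponent_ge hη (by linarith) (by norm_num)
      _ ≤ k * η ^ (-(3 : ℝ) / 2) := le_mul_of_one_le_left (by positivity) hk1'
  · intro j hj1 hjn
    rw [norm_smul, norm_of_nonneg (sqrt_nonneg η), hsqrt]
    calc η ^ 2 * η ^ (-(3 : ℝ) / 2) * ‖N j‖ ≤ η ^ 2 * η ^ (-(3 : ℝ) / 2) * (k / η) := by
          gcongr; exact (hN j hj1 hjn).le
      _ = η * (k * η ^ (-(3 : ℝ) / 2)) := by field_simp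

/-- Deterministic bound for the Euler–Maruyama recursion
`Y_{m+1} = Y_m − η Y_m log(1+|Y_m|) + √η N_{m+1}` with `η ∈ (0, e^{−5}]`,
`|x_0| ≤ η^{−1/2}`, `1 ≤ k ≤ ⌈e^{1/(2η)}⌉`, and increments bounded by `k/η`:
`sup_{1 ≤ m ≤ n} |Y_m| ≤ k η^{−3/2}`. -/
theorem em_bound_medium_noise
    (d : ℕ) (hd : 1 ≤ d) (n : ℕ) (η : ℝ) (hη : 0 < η) (hη' : η ≤ Real.exp (-5))
    (x₀ : EuclideanSpace ℝ (Fin d)) (hx₀ : ‖x₀‖ ≤ η ^ (-(1 : ℝ) / 2))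
    (k : ℕ) (hk1 : 1 ≤ k) (hk2 : k ≤ ⌈Real.exp (1 / (2 * η))⌉₊)
    (N : ℕ → EuclideanSpace ℝ (Fin d))
    (hN : ∀ m, 1 ≤ m → m ≤ n → ‖N m‖ < k / η)
    (Y : ℕ → EuclideanSpace ℝ (Fin d)) (hY0 : Y 0 = x₀)
    (hYrec : ∀ m, Y (m + 1) = Y m - (η * Real.log (1 + ‖Y m‖)) • Y m + Real.sqrt η • N (m + 1)) :
    ∀ m, 1 ≤ m → m ≤ n → ‖Y m‖ ≤ k * η ^ (-(3 : ℝ) / 2) :=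
  em_bound_medium_noise_general d n η hη hη' x₀ hx₀ k hk1 hk2 N hN Y hY0 hYrec
end

section
/- Let α ∈ (0,2), β ∈ (0,α), T > 0, n ∈ ℕ with η = T/n ≤ 1, κ_α = 2^α/(2^α − 1), σ > 0, and K_2 = 2(e^{κ_α/β} + 2/σ)/T. Let x_0 ∈ ℝ^d and let (z_k)_{1≤k≤n} be vectors in ℝ^d satisfying |z_k| ∈ [1+η, 2+2η] for all 2 ≤ k ≤ n and (η^{1/α}/σ)|z_1| ≥ |x_0|(1+log(1+|x_0|)) + e^{nK_2}. Define ỹ_0 = x_0, ỹ_{k+1} = ỹ_k − η ỹ_k log(1+|ỹ_k|) + (η^{1/α}/σ) z_{k+1}. Then for every 1 ≤ m ≤ n, |ỹ_m| ≥ exp{(κ_α/β)(m−1) + n K_2}. -/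
open Real

set_option maxHeartbeats 1000000

/-- Deterministic divergence of the Euler–Maruyama recursion
`ỹ_{k+1} = ỹ_k − η ỹ_k log(1+|ỹ_k|) + (η^{1/α}/σ) z_{k+1}` along a noise realization with
`|z_k| ∈ [1+η, 2+2η]` for `2 ≤ k ≤ n` and a large first jump: for every `1 ≤ m ≤ n`,
`|ỹ_m| ≥ exp{(κ_α/β)(m−1) + n K₂}`. -/
theorem em_deterministic_divergence
    (d : ℕ) (hd : 1 ≤ d) (α β T : ℝ) (hα : α ∈ Set.Ioo (0 : ℝ) 2)
    (hβ : β ∈ Set.Ioo (0 : ℝ) α) (hT : 0 < T)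
    (n : ℕ) (hn : 1 ≤ n) (η : ℝ) (hη : η = T / n) (hη1 : η ≤ 1)
    (κ : ℝ) (hκ : κ = 2 ^ α / (2 ^ α - 1))
    (σ : ℝ) (hσ : 0 < σ)
    (K₂ : ℝ) (hK₂ : K₂ = 2 * (Real.exp (κ / β) + 2 / σ) / T)
    (x₀ : EuclideanSpace ℝ (Fin d))
    (z : ℕ → EuclideanSpace ℝ (Fin d))
    (hz : ∀ k, 2 ≤ k → k ≤ n → ‖z k‖ ∈ Set.Icc (1 + η) (2 + 2 * η))
    (hz1 : ‖x₀‖ * (1 + Real.log (1 + ‖x₀‖)) + Real.exp (n * K₂) ≤ η ^ α⁻¹ / σ * ‖z 1‖)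
    (y : ℕ → EuclideanSpace ℝ (Fin d)) (hy0 : y 0 = x₀)
    (hyrec : ∀ k, y (k + 1) =
      y k - (η * Real.log (1 + ‖y k‖)) • y k + (η ^ α⁻¹ / σ) • z (k + 1)) :
    ∀ m, 1 ≤ m → m ≤ n → Real.exp (κ / β * ((m : ℝ) - 1) + n * K₂) ≤ ‖y m‖ := by
  have hnpos : (0:ℝ) < n := by exact_mod_cast hn
  have hηpos : 0 < η := by rw [hη]; positivity
  have h2α : (1:ℝ) < 2 ^ α :=
    (Real.one_lt_rpow_iff_of_pos (by norm_num : (0:ℝ) < 2)).mpr (Or.inl ⟨by norm_num, hα.1⟩)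
  have hκpos : 0 < κ := by rw [hκ]; exact div_pos (by positivity) (by linarith)
  have hκβ : 0 < κ / β := div_pos hκpos hβ.1
  have hK₂pos : 0 < K₂ := by rw [hK₂]; positivity
  have hcpos : 0 < η ^ α⁻¹ / σ := div_pos (Real.rpow_pos_of_pos hηpos _) hσ
  have hc1 : η ^ α⁻¹ ≤ 1 := Real.rpow_le_one hηpos.le hη1 (inv_nonneg.mpr hα.1.le)
  have hcσ : η ^ α⁻¹ / σ ≤ 1 / σ := by gcongr
  have hηn : η * n = T := by
    rw [hη, div_mul_cancel₀ _ hnpos.ne']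
  have hTK : T * K₂ = 2 * Real.exp (κ / β) + 4 / σ := by
    rw [hK₂]; field_simp; ring
  -- general step lemma
  have step : ∀ k, 1 ≤ k → k + 1 ≤ n →
      Real.exp (κ / β * ((k : ℝ) - 1) + n * K₂) ≤ ‖y k‖ →
      Real.exp (κ / β * ((k : ℝ) + 1 - 1) + n * K₂) ≤ ‖y (k + 1)‖ := by
    intro k hk1 hk1n ih
    set L := Real.log (1 + ‖y k‖) with hL
    have hy1 : (1:ℝ) ≤ ‖y k‖ := by
      refine le_trans (Real.one_le_exp ?_) ih
      have h0 : (0:ℝ) ≤ (k:ℝ) - 1 := by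
        have : (1:ℝ) ≤ (k:ℝ) := by exact_mod_cast hk1
        linarith
      nlinarith [mul_nonneg hκβ.le h0, mul_nonneg hnpos.le hK₂pos.le]
    have hLlb : (n:ℝ) * K₂ ≤ L := by
      have h1 : Real.exp ((n:ℝ) * K₂) ≤ ‖y k‖ := by
        refine le_trans ?_ ih
        apply Real.exp_le_exp.mpr
        have h0 : (0:ℝ) ≤ (k:ℝ) - 1 := by
          have : (1:ℝ) ≤ (k:ℝ) := by exact_mod_cast hk1
          linarith
        nlinarith [mul_nonneg hκβ.le h0, mul_nonneg hnpos.le hK₂pos.le]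
      have h2 : Real.log ‖y k‖ ≤ L := by
        apply Real.log_le_log (by linarith)
        linarith
      calc (n:ℝ) * K₂ = Real.log (Real.exp ((n:ℝ)*K₂)) := (Real.log_exp _).symm
        _ ≤ Real.log ‖y k‖ := Real.log_le_log (Real.exp_pos _) h1
        _ ≤ L := h2
    have hηL : 2 * Real.exp (κ / β) + 4 / σ ≤ η * L := by
      calc 2 * Real.exp (κ / β) + 4 / σ = T * K₂ := hTK.symm
        _ = η * (n * K₂) := by rw [← hηn]; ring
        _ ≤ η * L := by
          apply mul_le_mul_of_nonneg_left hLlb hηpos.le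
    have hexp1 : (1:ℝ) ≤ Real.exp (κ / β) := Real.one_le_exp hκβ.le
    have hηL1 : 1 ≤ η * L := by nlinarith [div_nonneg (by norm_num : (0:ℝ) ≤ 4) hσ.le]
    -- norm bound on z (k+1)
    have hzk : ‖z (k+1)‖ ≤ 2 + 2 * η := (hz (k+1) (by omega) hk1n).2
    have hbz : ‖(η ^ α⁻¹ / σ) • z (k+1)‖ ≤ 4 / σ := by
      rw [norm_smul, Real.norm_eq_abs, abs_of_pos hcpos]
      calc η ^ α⁻¹ / σ * ‖z (k+1)‖ ≤ (1/σ) * (2 + 2*η) := by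
            apply mul_le_mul hcσ hzk (norm_nonneg _) (by positivity)
        _ ≤ (1/σ) * 4 := by nlinarith [one_div_pos.mpr hσ]
        _ = 4 / σ := by ring
    have hrw : y k - (η * L) • y k = (1 - η * L) • y k := by
      rw [sub_smul, one_smul]
    have hnorm1 : ‖y k - (η * L) • y k‖ = (η * L - 1) * ‖y k‖ := by
      rw [hrw, norm_smul, Real.norm_eq_abs, abs_of_nonpos (by linarith)]
      ring
    have key : (η * L - 1) * ‖y k‖ - 4/σ ≤ ‖y (k+1)‖ := by
      rw [hyrec k, ← hL]
      have : ‖y k - (η * L) • y k‖ ≤ ‖y k - (η * L) • y k + (η ^ α⁻¹ / σ) • z (k+1)‖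
          + ‖(η ^ α⁻¹ / σ) • z (k+1)‖ := by
        calc ‖y k - (η * L) • y k‖
            = ‖(y k - (η * L) • y k + (η ^ α⁻¹ / σ) • z (k+1)) - (η ^ α⁻¹ / σ) • z (k+1)‖ := by
              rw [add_sub_cancel_right]
          _ ≤ _ := norm_sub_le _ _
      calc (η * L - 1) * ‖y k‖ - 4/σ
          ≤ ‖y k - (η * L) • y k‖ - ‖(η ^ α⁻¹ / σ) • z (k+1)‖ := by
            rw [hnorm1]; linarith
        _ ≤ ‖y k - (η * L) • y k + (η ^ α⁻¹ / σ) • z (k+1)‖ := by linarith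
    have hfin : Real.exp (κ/β) * ‖y k‖ ≤ ‖y (k+1)‖ := by
      have h4 : 4/σ ≤ (4/σ) * ‖y k‖ := le_mul_of_one_le_right (by positivity) hy1
      nlinarith [norm_nonneg (y k)]
    calc Real.exp (κ / β * ((k : ℝ) + 1 - 1) + n * K₂)
        = Real.exp (κ/β) * Real.exp (κ / β * ((k : ℝ) - 1) + n * K₂) := by
          rw [← Real.exp_add]; ring_nf
      _ ≤ Real.exp (κ/β) * ‖y k‖ := by
          apply mul_le_mul_of_nonneg_left ih (Real.exp_pos _).le
      _ ≤ ‖y (k+1)‖ := hfin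
  -- base case m = 1
  have base : Real.exp (κ / β * ((1 : ℝ) - 1) + n * K₂) ≤ ‖y 1‖ := by
    have h1 : y 1 = y 0 - (η * Real.log (1 + ‖y 0‖)) • y 0 + (η ^ α⁻¹ / σ) • z 1 := hyrec 0
    rw [hy0] at h1
    have hLnn : 0 ≤ Real.log (1 + ‖x₀‖) :=
      Real.log_nonneg (by linarith [norm_nonneg x₀])
    have hb : ‖x₀ - (η * Real.log (1 + ‖x₀‖)) • x₀‖ ≤ ‖x₀‖ * (1 + Real.log (1 + ‖x₀‖)) := by
      calc ‖x₀ - (η * Real.log (1 + ‖x₀‖)) • x₀‖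
          ≤ ‖x₀‖ + ‖(η * Real.log (1 + ‖x₀‖)) • x₀‖ := norm_sub_le _ _
        _ = ‖x₀‖ + η * Real.log (1 + ‖x₀‖) * ‖x₀‖ := by
            rw [norm_smul, Real.norm_eq_abs, abs_of_nonneg (by positivity)]
        _ ≤ ‖x₀‖ * (1 + Real.log (1 + ‖x₀‖)) := by
            nlinarith [mul_nonneg (mul_nonneg (by linarith : (0:ℝ) ≤ 1 - η) hLnn)
              (norm_nonneg x₀)]
    have h2 : ‖(η ^ α⁻¹ / σ) • z 1‖ - ‖x₀ - (η * Real.log (1 + ‖x₀‖)) • x₀‖ ≤ ‖y 1‖ := by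
      rw [h1]
      have : ‖(η ^ α⁻¹ / σ) • z 1‖ ≤ ‖x₀ - (η * Real.log (1 + ‖x₀‖)) • x₀
          + (η ^ α⁻¹ / σ) • z 1‖ + ‖x₀ - (η * Real.log (1 + ‖x₀‖)) • x₀‖ := by
        calc ‖(η ^ α⁻¹ / σ) • z 1‖
            = ‖(x₀ - (η * Real.log (1 + ‖x₀‖)) • x₀ + (η ^ α⁻¹ / σ) • z 1)
              - (x₀ - (η * Real.log (1 + ‖x₀‖)) • x₀)‖ := by rw [add_sub_cancel_left]
          _ ≤ _ := norm_sub_le _ _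
      linarith
    have h3 : ‖(η ^ α⁻¹ / σ) • z 1‖ = η ^ α⁻¹ / σ * ‖z 1‖ := by
      rw [norm_smul, Real.norm_eq_abs, abs_of_pos hcpos]
    rw [show κ / β * ((1:ℝ) - 1) + n * K₂ = (n:ℝ) * K₂ by ring]
    rw [h3] at h2
    linarith
  intro m hm1 hmn
  induction m with
  | zero => omega
  | succ k ih =>
    rcases Nat.lt_or_ge k 1 with hk | hk
    · interval_cases k
      simpa using base
    · have := step k hk (by omega) (ih hk (by omega))
      convert this using 3
      push_cast
      ring
end

section
/- Let d ≥ 1, α ∈ (0,1], β ∈ (0,α), and define V_β : ℝ^d → ℝ by V_β(x) = (1+|x|²)^{β/2}. Then for every x ∈ ℝ^d, ∫_{ℝ^d∖{0}} [ V_β(x+z) − V_β(x) − ⟨∇V_β(x), z⟩ 1_{(0,1)}(|z|) ] |z|^{−(d+α)} dz ≤ (2α−β) s_{d−1} / (α(α−β)) + β(3−β) s_{d−1} √d / (2(2−α)). -/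
open MeasureTheory Real
open scoped RealInnerProductSpace

/-!
For `|z| < 1`, concavity of `t ↦ t^{β/2}` at `t = 1 + |x|²` bounds the compensated increment
`V_β(x+z) - V_β(x) - ⟨∇V_β(x), z⟩` by `(β/2)|z|²`; for `|z| ≥ 1`, the triangle inequality
`√(1+|x+z|²) ≤ √(1+|x|²) + |z|` and subadditivity of `t ↦ t^β` bound `V_β(x+z) - V_β(x)` by
`|z|^β`. The integrand is thus dominated by a radial function whose integral in polar coordinates
is `s_{d-1} ((β/2)/(2-α) + 1/(α-β))`, and this is at most the stated constant.
-/

open Set Metric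

theorem rpow_le_rpow_add_tangent {a y p : ℝ} (ha : 0 < a) (hy : 0 ≤ y) (hp0 : 0 ≤ p)
    (hp1 : p ≤ 1) : y ^ p ≤ a ^ p + p * a ^ (p - 1) * (y - a) := by
  have hya : y = a * (1 + (y / a - 1)) := by field_simp; ring
  calc y ^ p = a ^ p * (1 + (y / a - 1)) ^ p := by
        rw [← mul_rpow ha.le (by simp; positivity), ← hya]
    _ ≤ a ^ p * (1 + p * (y / a - 1)) := by
        gcongr
        exact rpow_one_add_le_one_add_mul_self (by simp; positivity) hp0 hp1
    _ = a ^ p + p * (a ^ p / a) * (y - a) := by field_simp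
    _ = a ^ p + p * a ^ (p - 1) * (y - a) := by rw [← rpow_sub_one ha.ne']

section Increment

variable {E : Type*} [NormedAddCommGroup E]

theorem sqrt_one_add_norm_add_sq_le (x z : E) :
    √(1 + ‖x + z‖ ^ 2) ≤ √(1 + ‖x‖ ^ 2) + ‖z‖ := by
  have hx : ‖x‖ ≤ √(1 + ‖x‖ ^ 2) := le_sqrt_of_sq_le (by linarith)
  have hsq : √(1 + ‖x‖ ^ 2) ^ 2 = 1 + ‖x‖ ^ 2 := sq_sqrt (by positivity)
  rw [sqrt_le_left (by positivity)]
  nlinarith [norm_add_le x z, norm_nonneg (x + z), norm_nonneg z,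
    mul_le_mul_of_nonneg_right hx (norm_nonneg z)]

theorem one_add_norm_sq_rpow_sub_le {β : ℝ} (hβ0 : 0 ≤ β) (hβ1 : β ≤ 1) (x z : E) :
    (1 + ‖x + z‖ ^ 2) ^ (β / 2) - (1 + ‖x‖ ^ 2) ^ (β / 2) ≤ ‖z‖ ^ β := by
  have hsqrt (y : E) : (1 + ‖y‖ ^ 2) ^ (β / 2) = √(1 + ‖y‖ ^ 2) ^ β := by
    rw [sqrt_eq_rpow, ← rpow_mul (by positivity)]
    ring_nf
  rw [hsqrt, hsqrt, sub_le_iff_le_add']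
  calc √(1 + ‖x + z‖ ^ 2) ^ β ≤ (√(1 + ‖x‖ ^ 2) + ‖z‖) ^ β := by
        gcongr
        exact sqrt_one_add_norm_add_sq_le x z
    _ ≤ √(1 + ‖x‖ ^ 2) ^ β + ‖z‖ ^ β :=
        rpow_add_le_add_rpow (by positivity) (by positivity) hβ0 hβ1

variable [InnerProductSpace ℝ E]

theorem one_add_norm_sq_rpow_sub_sub_inner_le {β : ℝ} (hβ0 : 0 ≤ β) (hβ2 : β ≤ 2)
    (x z : E) :
    (1 + ‖x + z‖ ^ 2) ^ (β / 2) - (1 + ‖x‖ ^ 2) ^ (β / 2)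
      - ⟪(β / (1 + ‖x‖ ^ 2) ^ (1 - β / 2)) • x, z⟫ ≤ β / 2 * ‖z‖ ^ 2 := by
  set a : ℝ := 1 + ‖x‖ ^ 2
  have ha : 1 ≤ a := by simp only [a]; nlinarith [sq_nonneg ‖x‖]
  have hgrad : β / a ^ (1 - β / 2) = β * a ^ (β / 2 - 1) := by
    rw [show β / 2 - 1 = -(1 - β / 2) by ring, rpow_neg (by positivity), div_eq_mul_inv]
  have hpow : a ^ (β / 2 - 1) ≤ 1 := rpow_le_one_of_one_le_of_nonpos ha (by linarith)
  have htan := rpow_le_rpow_add_tangent (a := a) (y := 1 + ‖x + z‖ ^ 2) (by positivity)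
    (by positivity) (by linarith : 0 ≤ β / 2) (by linarith : β / 2 ≤ 1)
  rw [show 1 + ‖x + z‖ ^ 2 - a = 2 * ⟪x, z⟫ + ‖z‖ ^ 2 by
    simp only [a]; rw [norm_add_sq_real]; ring] at htan
  rw [real_inner_smul_left, hgrad]
  nlinarith [mul_le_mul_of_nonneg_left hpow (by positivity : 0 ≤ β / 2 * ‖z‖ ^ 2)]

noncomputable def stableMajorant (β r : ℝ) : ℝ := if r < 1 then β / 2 * r ^ 2 else r ^ β

theorem stableMajorant_nonneg {β r : ℝ} (hβ : 0 ≤ β) (hr : 0 ≤ r) :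
    0 ≤ stableMajorant β r := by
  unfold stableMajorant
  split_ifs <;> positivity

theorem one_add_norm_sq_rpow_increment_le_stableMajorant {β : ℝ} (hβ0 : 0 ≤ β) (hβ1 : β ≤ 1)
    (x z : E) :
    (1 + ‖x + z‖ ^ 2) ^ (β / 2) - (1 + ‖x‖ ^ 2) ^ (β / 2)
      - (ball 0 1).indicator (fun z => ⟪(β / (1 + ‖x‖ ^ 2) ^ (1 - β / 2)) • x, z⟫) z
      ≤ stableMajorant β ‖z‖ := by
  by_cases hz : ‖z‖ < 1
  · rw [indicator_of_mem (mem_ball_zero_iff.2 hz), stableMajorant, if_pos hz]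
    exact one_add_norm_sq_rpow_sub_sub_inner_le hβ0 (by linarith) x z
  · rw [indicator_of_notMem (mt mem_ball_zero_iff.1 hz), stableMajorant, if_neg hz, sub_zero]
    exact one_add_norm_sq_rpow_sub_le hβ0 hβ1 x z

end Increment

section Radial

variable {n : ℕ} {α β : ℝ}

theorem pow_pred_div_rpow_natCast_add (hn : 1 ≤ n) {y : ℝ} (hy : 0 < y) :
    y ^ (n - 1) / y ^ ((n : ℝ) + α) = y ^ (-1 - α) := by
  rw [← rpow_natCast, Nat.cast_pred hn, ← rpow_sub hy]
  ring_nf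

theorem pow_pred_mul_stableMajorant_div_of_lt_one (hn : 1 ≤ n) {y : ℝ} (hy : y ∈ Ioo 0 1) :
    y ^ (n - 1) * (stableMajorant β y / y ^ ((n : ℝ) + α)) = β / 2 * y ^ (1 - α) := by
  rw [stableMajorant, if_pos hy.2, mul_div_assoc', mul_comm, mul_div_assoc, mul_assoc,
    pow_pred_div_rpow_natCast_add hn hy.1, ← rpow_two, ← rpow_add hy.1]
  ring_nf

theorem pow_pred_mul_stableMajorant_div_of_one_le (hn : 1 ≤ n) {y : ℝ} (hy : y ∈ Ici 1) :
    y ^ (n - 1) * (stableMajorant β y / y ^ ((n : ℝ) + α)) = y ^ (β - α - 1) := by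
  have hy0 : 0 < y := zero_lt_one.trans_le hy
  rw [stableMajorant, if_neg (not_lt.2 hy), mul_div_assoc', mul_comm, mul_div_assoc,
    pow_pred_div_rpow_natCast_add hn hy0, ← rpow_add hy0]
  ring_nf

variable (hn : 1 ≤ n)
include hn

theorem integrableOn_Ioo_pow_pred_mul_stableMajorant_div (hα : α < 2) :
    IntegrableOn (fun y => y ^ (n - 1) * (stableMajorant β y / y ^ ((n : ℝ) + α)))
      (Ioo 0 1) := by
  refine IntegrableOn.congr_fun ?_
    (fun y hy => (pow_pred_mul_stableMajorant_div_of_lt_one hn hy).symm) measurableSet_Ioo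
  have h := intervalIntegral.intervalIntegrable_rpow' (a := 0) (b := 1) (r := 1 - α) (by linarith)
  exact ((intervalIntegrable_iff_integrableOn_Ioo_of_le zero_le_one).1 h).const_mul _

theorem integrableOn_Ici_pow_pred_mul_stableMajorant_div (hβα : β < α) :
    IntegrableOn (fun y => y ^ (n - 1) * (stableMajorant β y / y ^ ((n : ℝ) + α))) (Ici 1) := by
  refine IntegrableOn.congr_fun ?_
    (fun y hy => (pow_pred_mul_stableMajorant_div_of_one_le hn hy).symm) measurableSet_Ici
  rw [integrableOn_Ici_iff_integrableOn_Ioi]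
  exact integrableOn_Ioi_rpow_of_lt (by linarith) one_pos

theorem integrableOn_Ioi_pow_pred_mul_stableMajorant_div (hα : α < 2) (hβα : β < α) :
    IntegrableOn (fun y => y ^ (n - 1) * (stableMajorant β y / y ^ ((n : ℝ) + α))) (Ioi 0) := by
  rw [← Ioo_union_Ici_eq_Ioi one_pos]
  exact (integrableOn_Ioo_pow_pred_mul_stableMajorant_div hn hα).union
    (integrableOn_Ici_pow_pred_mul_stableMajorant_div hn hβα)

theorem integral_Ioi_pow_pred_mul_stableMajorant_div (hα : α < 2) (hβα : β < α) :
    ∫ y in Ioi 0, y ^ (n - 1) * (stableMajorant β y / y ^ ((n : ℝ) + α))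
      = β / 2 / (2 - α) + 1 / (α - β) := by
  have hnear : ∫ y in Ioo 0 1, y ^ (n - 1) * (stableMajorant β y / y ^ ((n : ℝ) + α))
      = β / 2 / (2 - α) := by
    rw [setIntegral_congr_fun measurableSet_Ioo
        (fun y hy => pow_pred_mul_stableMajorant_div_of_lt_one hn hy), integral_const_mul,
      ← integral_Ioc_eq_integral_Ioo, ← intervalIntegral.integral_of_le zero_le_one,
      integral_rpow (Or.inl (by linarith)), one_rpow, zero_rpow (by linarith),
      show 1 - α + 1 = 2 - α by ring]
    ring
  have hfar : ∫ y in Ici 1, y ^ (n - 1) * (stableMajorant β y / y ^ ((n : ℝ) + α))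
      = 1 / (α - β) := by
    rw [setIntegral_congr_fun measurableSet_Ici
        (fun y hy => pow_pred_mul_stableMajorant_div_of_one_le hn hy),
      integral_Ici_eq_integral_Ioi, integral_Ioi_rpow_of_lt (by linarith) one_pos, one_rpow,
      show β - α - 1 + 1 = -(α - β) by ring, div_neg, neg_div, neg_neg]
  rw [← Ioo_union_Ici_eq_Ioi one_pos,
    setIntegral_union ((Iio_disjoint_Ici le_rfl).mono_left Ioo_subset_Iio_self) measurableSet_Ici
      (integrableOn_Ioo_pow_pred_mul_stableMajorant_div hn hα)
      (integrableOn_Ici_pow_pred_mul_stableMajorant_div hn hβα), hnear, hfar]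

end Radial

section HaarRadial

variable {E : Type*} [NormedAddCommGroup E] [NormedSpace ℝ E] [MeasurableSpace E] [BorelSpace E]
  [FiniteDimensional ℝ E] [Nontrivial E] (μ : Measure E) [μ.IsAddHaarMeasure] {α β : ℝ}

theorem integrable_stableMajorant_norm_div (hα : α < 2) (hβα : β < α) :
    Integrable (fun z : E => stableMajorant β ‖z‖ / ‖z‖ ^ ((Module.finrank ℝ E : ℝ) + α))
      μ := by
  rw [integrable_fun_norm_addHaar μ (f := fun r => stableMajorant β r / r ^ _)]
  exact integrableOn_Ioi_pow_pred_mul_stableMajorant_div Module.finrank_pos hα hβα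

theorem integral_stableMajorant_norm_div (hα : α < 2) (hβα : β < α) :
    ∫ z, stableMajorant β ‖z‖ / ‖z‖ ^ ((Module.finrank ℝ E : ℝ) + α) ∂μ
      = Module.finrank ℝ E * μ.real (ball 0 1) * (β / 2 / (2 - α) + 1 / (α - β)) := by
  rw [integral_fun_norm_addHaar μ (fun r => stableMajorant β r / r ^ _), nsmul_eq_mul,
    smul_eq_mul, mul_assoc]
  simp only [smul_eq_mul]
  rw [integral_Ioi_pow_pred_mul_stableMajorant_div Module.finrank_pos hα hβα]

end HaarRadial

theorem natCast_mul_measureReal_ball_eq_sphereArea (d : ℕ) :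
    d * volume.real (ball (0 : EuclideanSpace ℝ (Fin d)) 1) = sphereArea d := by
  rcases d.eq_zero_or_pos with rfl | hd
  · simp [sphereArea]
  have : Nonempty (Fin d) := ⟨⟨0, hd⟩⟩
  have hΓ : Gamma ((d : ℝ) / 2) ≠ 0 := (Gamma_pos_of_pos (by positivity)).ne'
  have hsqrt : √π ^ d = π ^ ((d : ℝ) / 2) := by
    rw [sqrt_eq_rpow, ← rpow_natCast, ← rpow_mul pi_pos.le]
    ring_nf
  rw [measureReal_def, EuclideanSpace.volume_ball, Fintype.card_fin, ENNReal.ofReal_one,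
    one_pow, one_mul, ENNReal.toReal_ofReal (by positivity), hsqrt, Gamma_add_one (by positivity),
    sphereArea]
  field_simp

theorem integral_mono_of_nonneg_right {X : Type*} [MeasurableSpace X] {μ : Measure X}
    {f g : X → ℝ} (hg : Integrable g μ) (hg0 : 0 ≤ᵐ[μ] g) (h : f ≤ᵐ[μ] g) :
    ∫ a, f a ∂μ ≤ ∫ a, g a ∂μ := by
  by_cases hf : Integrable f μ
  · exact integral_mono_ae hf hg h
  · exact integral_undef hf ▸ integral_nonneg_of_ae hg0

theorem mul_add_le_lyapunov_constant {d : ℕ} {s α β : ℝ} (hd : 1 ≤ d) (hs : 0 ≤ s)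
    (hα1 : α ≤ 1) (hβ0 : 0 < β) (hβα : β < α) :
    s * (β / 2 / (2 - α) + 1 / (α - β))
      ≤ (2 * α - β) * s / (α * (α - β)) + β * (3 - β) * s * √d / (2 * (2 - α)) := by
  have hα0 : 0 < α := hβ0.trans hβα
  have hlarge : s * (1 / (α - β)) ≤ (2 * α - β) * s / (α * (α - β)) := by
    have : α - β ≠ 0 := by linarith
    rw [show (2 * α - β) * s / (α * (α - β)) = s * (1 / (α - β)) + s / α by field_simp; ring]
    linarith [div_nonneg hs hα0.le]
  have hsmall : s * (β / 2 / (2 - α)) ≤ β * (3 - β) * s * √d / (2 * (2 - α)) := by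
    have h2α : 0 < 2 - α := by linarith
    rw [show β * (3 - β) * s * √d / (2 * (2 - α)) = s * (β / 2 / (2 - α)) * ((3 - β) * √d) by
        rw [mul_comm 2, ← div_div]; ring]
    refine le_mul_of_one_le_right (by positivity) ?_
    nlinarith [one_le_sqrt.2 (Nat.one_le_cast.2 hd : (1 : ℝ) ≤ d)]
  linarith [mul_add s (β / 2 / (2 - α)) (1 / (α - β))]

/-- For `α ∈ (0,1]`, `β ∈ (0,α)` and `V_β(x) = (1+|x|²)^{β/2}` on `ℝ^d`, the α-stable nonlocal
increment satisfies
`∫_{ℝ^d∖{0}} [V_β(x+z) − V_β(x) − ⟨∇V_β(x), z⟩ 1_{(0,1)}(|z|)] |z|^{−(d+α)} dz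
  ≤ (2α−β) s_{d−1}/(α(α−β)) + β(3−β) s_{d−1} √d / (2(2−α))`,
where `∇V_β(x) = βx/(1+|x|²)^{1−β/2}`. -/
theorem stable_generator_lyapunov_bound_subcritical
    (d : ℕ) (hd : 1 ≤ d) (α β : ℝ) (hα : α ∈ Set.Ioc (0 : ℝ) 1) (hβ : β ∈ Set.Ioo (0 : ℝ) α)
    (V : EuclideanSpace ℝ (Fin d) → ℝ) (hV : ∀ x, V x = (1 + ‖x‖ ^ 2) ^ (β / 2)) :
    ∀ x : EuclideanSpace ℝ (Fin d),
      (∫ z in ({0}ᶜ : Set (EuclideanSpace ℝ (Fin d))),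
          (V (x + z) - V x -
            Set.indicator (Metric.ball 0 1)
              (fun z => ⟪(β / (1 + ‖x‖ ^ 2) ^ (1 - β / 2)) • x, z⟫) z)
            / ‖z‖ ^ ((d : ℝ) + α) ∂volume)
        ≤ (2 * α - β) * sphereArea d / (α * (α - β))
          + β * (3 - β) * sphereArea d * Real.sqrt d / (2 * (2 - α)) := by
  intro x
  have : Nonempty (Fin d) := ⟨⟨0, hd⟩⟩
  have hα2 : α < 2 := by linarith [hα.2]
  have hdim : (Module.finrank ℝ (EuclideanSpace ℝ (Fin d)) : ℝ) = d := by simp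
  have hs : 0 ≤ sphereArea d := by
    rw [← natCast_mul_measureReal_ball_eq_sphereArea]; positivity
  calc _ ≤ ∫ z in ({0}ᶜ : Set (EuclideanSpace ℝ (Fin d))),
          stableMajorant β ‖z‖ / ‖z‖ ^ ((d : ℝ) + α) := by
        refine integral_mono_of_nonneg_right ?_ ?_ ?_
        · have hint := integrable_stableMajorant_norm_div
            (E := EuclideanSpace ℝ (Fin d)) volume hα2 hβ.2
          rw [hdim] at hint
          exact hint.restrict
        · exact .of_forall fun z =>
            div_nonneg (stableMajorant_nonneg hβ.1.le (norm_nonneg z)) (by positivity)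
        · refine .of_forall fun z => div_le_div_of_nonneg_right ?_ (by positivity)
          rw [hV, hV]
          exact one_add_norm_sq_rpow_increment_le_stableMajorant hβ.1.le
            (hβ.2.trans_le hα.2).le x z
    _ = sphereArea d * (β / 2 / (2 - α) + 1 / (α - β)) := by
        rw [restrict_compl_singleton, ← hdim, integral_stableMajorant_norm_div _ hα2 hβ.2, hdim,
          natCast_mul_measureReal_ball_eq_sphereArea]
    _ ≤ _ := mul_add_le_lyapunov_constant hd hs hα.2 hβ.1 hβ.2
end
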